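/- Cutset bound for the two-way deterministic IC: for any achievable rate tuple, R₁ + R̃₂ ≤ n + ñ. Formally, for random variables forming a length-N code with encoding functions X_{2i} = f(W₂, Ỹ₂^{i-1}) and X̃_{1i} = f̃(W̃₁, Y₁^{i-1}), where (W₁, W̃₂) is independent of (W₂, W̃₁), and the channel outputs satisfy H(Y_{1i} | X_{1i}, X_{2i}) = 0 with H(Y_{1i} | X_{2i}) ≤ n and H(Ỹ_{2i} | X̃_{1i}) ≤ ñ, one has I(W₁, W̃₂ ; Y₁^N, W̃₁, Ỹ₂^N, W₂) ≤ N(n + ñ). -/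

import Mathlib

/-! Split the observation into the messages `V = (W̃₁, W₂)` and the two output sequences. Since
`(W₁, W̃₂)` is independent of `V`, the mutual information is `I(W₁, W̃₂; Y₁ᴺ, Ỹ₂ᴺ | V)`, which is at
most `H(Y₁ᴺ, Ỹ₂ᴺ | V)`. By the chain rule this is the sum over `i` of
`H(Y₁ᵢ, Ỹ₂ᵢ | past outputs, V)`, and the past outputs together with `V` determine both `X₂ᵢ` and
`X̃₁ᵢ`, so each term is at most `H(Y₁ᵢ | X₂ᵢ) + H(Ỹ₂ᵢ | X̃₁ᵢ) ≤ n + ñ`. Every entropy inequality used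
is an instance of `I(X; Y | Z) ≥ 0`, i.e. of Gibbs' inequality. -/

open Finset

/-- Probability mass of a value of a discrete random variable `X` under weights `p`. -/
noncomputable def pmass {Ω : Type} [Fintype Ω] (p : Ω → ℝ) {S : Type} [DecidableEq S]
    (X : Ω → S) (s : S) : ℝ :=
  ∑ ω, if X ω = s then p ω else 0

/-- Shannon entropy of a discrete random variable `X` on a finite alphabet. -/
noncomputable def ent {Ω : Type} [Fintype Ω] (p : Ω → ℝ) {S : Type} [Fintype S] [DecidableEq S]
    (X : Ω → S) : ℝ :=
  -∑ s, pmass p X s * Real.log (pmass p X s)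

/-- Conditional entropy H(X | Z). -/
noncomputable def condEnt {Ω : Type} [Fintype Ω] (p : Ω → ℝ) {S U : Type}
    [Fintype S] [DecidableEq S] [Fintype U] [DecidableEq U]
    (X : Ω → S) (Z : Ω → U) : ℝ :=
  ent p (fun ω => (X ω, Z ω)) - ent p Z

/-- Mutual information I(X;Y). -/
noncomputable def mutInfo {Ω : Type} [Fintype Ω] (p : Ω → ℝ) {S T : Type}
    [Fintype S] [DecidableEq S] [Fintype T] [DecidableEq T]
    (X : Ω → S) (Y : Ω → T) : ℝ :=
  ent p X + ent p Y - ent p (fun ω => (X ω, Y ω))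

/-- Conditional mutual information I(X;Y|Z). -/
noncomputable def condMutInfo {Ω : Type} [Fintype Ω] (p : Ω → ℝ) {S T U : Type}
    [Fintype S] [DecidableEq S] [Fintype T] [DecidableEq T] [Fintype U] [DecidableEq U]
    (X : Ω → S) (Y : Ω → T) (Z : Ω → U) : ℝ :=
  ent p (fun ω => (X ω, Z ω)) + ent p (fun ω => (Y ω, Z ω))
    - ent p (fun ω => (X ω, Y ω, Z ω)) - ent p Z

/-- Triple mutual information (interaction information) I(X;Y;Z) := I(X;Y) - I(X;Y|Z). -/
noncomputable def tripleInfo {Ω : Type} [Fintype Ω] (p : Ω → ℝ) {S T U : Type}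
    [Fintype S] [DecidableEq S] [Fintype T] [DecidableEq T] [Fintype U] [DecidableEq U]
    (X : Ω → S) (Y : Ω → T) (Z : Ω → U) : ℝ :=
  mutInfo p X Y - condMutInfo p X Y Z

section Entropy

variable {Ω : Type} [Fintype Ω] {p : Ω → ℝ}

lemma pmass_congr {S T : Type} [DecidableEq S] [DecidableEq T]
    {X : Ω → S} {Y : Ω → T} {s : S} {t : T} (h : ∀ ω, X ω = s ↔ Y ω = t) :
    pmass p X s = pmass p Y t :=
  Finset.sum_congr rfl fun ω _ => if_congr (h ω) rfl rfl

lemma pmass_nonneg (hp0 : ∀ ω, 0 ≤ p ω) {S : Type} [DecidableEq S] (X : Ω → S) (s : S) :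
    0 ≤ pmass p X s :=
  Finset.sum_nonneg fun ω _ => by split_ifs <;> simp [hp0 ω]

lemma pmass_le_pmass (hp0 : ∀ ω, 0 ≤ p ω) {S T : Type} [DecidableEq S] [DecidableEq T]
    {X : Ω → S} {Y : Ω → T} {s : S} {t : T} (h : ∀ ω, X ω = s → Y ω = t) :
    pmass p X s ≤ pmass p Y t := by
  refine Finset.sum_le_sum fun ω _ => ?_
  by_cases hs : X ω = s
  · simp [hs, h ω hs]
  · simp only [hs, if_false]
    split_ifs <;> simp [hp0 ω]

lemma le_pmass_apply (hp0 : ∀ ω, 0 ≤ p ω) {S : Type} [DecidableEq S] (X : Ω → S) (ω : Ω) :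
    p ω ≤ pmass p X (X ω) := by
  calc p ω = if X ω = X ω then p ω else 0 := (if_pos rfl).symm
    _ ≤ pmass p X (X ω) :=
      Finset.single_le_sum (f := fun ω' => if X ω' = X ω then p ω' else 0)
        (fun ω' _ => by split_ifs <;> simp [hp0 ω']) (Finset.mem_univ ω)

lemma sum_pmass_mul {S : Type} [Fintype S] [DecidableEq S] (X : Ω → S) (φ : S → ℝ) :
    ∑ s, pmass p X s * φ s = ∑ ω, p ω * φ (X ω) := by
  simp only [pmass, Finset.sum_mul, ite_mul, zero_mul]
  rw [Finset.sum_comm]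
  simp

lemma sum_fst_pmass_pair {S T : Type} [Fintype S] [DecidableEq S] [DecidableEq T]
    (X : Ω → S) (Y : Ω → T) (t : T) :
    ∑ s, pmass p (fun ω => (X ω, Y ω)) (s, t) = pmass p Y t := by
  unfold pmass
  rw [Finset.sum_comm]
  refine Finset.sum_congr rfl fun ω _ => ?_
  by_cases h : Y ω = t <;> simp [Prod.ext_iff, h]

lemma sum_snd_pmass_pair {S T : Type} [DecidableEq S] [Fintype T] [DecidableEq T]
    (X : Ω → S) (Y : Ω → T) (s : S) :
    ∑ t, pmass p (fun ω => (X ω, Y ω)) (s, t) = pmass p X s := by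
  unfold pmass
  rw [Finset.sum_comm]
  refine Finset.sum_congr rfl fun ω _ => ?_
  by_cases h : X ω = s <;> simp [Prod.ext_iff, h]

lemma sum_pmass {S : Type} [Fintype S] [DecidableEq S] (X : Ω → S) :
    ∑ s, pmass p X s = ∑ ω, p ω := by
  simpa using sum_pmass_mul (p := p) X fun _ => 1

lemma ent_eq_neg_sum {S : Type} [Fintype S] [DecidableEq S] (X : Ω → S) :
    ent p X = -∑ ω, p ω * Real.log (pmass p X (X ω)) := by
  rw [ent, sum_pmass_mul X fun s => Real.log (pmass p X s)]

lemma ent_congr_of_iff {S T : Type} [Fintype S] [DecidableEq S] [Fintype T] [DecidableEq T]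
    {X : Ω → S} {Y : Ω → T} (h : ∀ ω ω', X ω' = X ω ↔ Y ω' = Y ω) :
    ent p X = ent p Y := by
  simp only [ent_eq_neg_sum, pmass_congr (h _)]

lemma pmass_apply_pos (hp0 : ∀ ω, 0 ≤ p ω) {S : Type} [DecidableEq S] (X : Ω → S) {ω : Ω}
    (hω : 0 < p ω) : 0 < pmass p X (X ω) :=
  hω.trans_le (le_pmass_apply hp0 X ω)

variable {S T U : Type} [Fintype S] [DecidableEq S] [Fintype T] [DecidableEq T]
  [Fintype U] [DecidableEq U]

lemma condEnt_nonneg (hp0 : ∀ ω, 0 ≤ p ω) (X : Ω → S) (Z : Ω → U) :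
    0 ≤ condEnt p X Z := by
  rw [condEnt, ent_eq_neg_sum, ent_eq_neg_sum, sub_nonneg, neg_le_neg_iff]
  refine Finset.sum_le_sum fun ω _ => ?_
  rcases (hp0 ω).eq_or_lt with hω | hω
  · simp [← hω]
  · refine mul_le_mul_of_nonneg_left (Real.log_le_log (pmass_apply_pos hp0 _ hω) ?_) hω.le
    exact pmass_le_pmass hp0 fun ω' h => congrArg Prod.snd h

lemma sum_mul_log_le (hp0 : ∀ ω, 0 ≤ p ω) (hp1 : ∑ ω, p ω = 1) (r : Ω → ℝ)
    (hr : ∀ ω, 0 < p ω → 0 < r ω) :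
    ∑ ω, p ω * Real.log (r ω) ≤ ∑ ω, p ω * r ω - 1 := by
  calc ∑ ω, p ω * Real.log (r ω) ≤ ∑ ω, p ω * (r ω - 1) := by
        refine Finset.sum_le_sum fun ω _ => ?_
        rcases (hp0 ω).eq_or_lt with hω | hω
        · simp [← hω]
        · exact mul_le_mul_of_nonneg_left (Real.log_le_sub_one_of_pos (hr ω hω)) hω.le
    _ = ∑ ω, p ω * r ω - 1 := by simp [mul_sub, hp1]

lemma sum_pmass_mul_pmass_div_pmass (hp0 : ∀ ω, 0 ≤ p ω) (hp1 : ∑ ω, p ω = 1)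
    (X : Ω → S) (Y : Ω → T) (Z : Ω → U) :
    ∑ i : S × T × U, pmass p (fun ω => (X ω, Z ω)) (i.1, i.2.2)
      * pmass p (fun ω => (Y ω, Z ω)) i.2 / pmass p Z i.2.2 = 1 := by
  rw [Fintype.sum_prod_type, Finset.sum_comm]
  simp only [← Finset.sum_div, ← Finset.sum_mul, sum_fst_pmass_pair]
  simp only [mul_comm (pmass p Z _), mul_div_assoc]
  rw [sum_pmass_mul (fun ω => (Y ω, Z ω)) fun i => pmass p Z i.2 / pmass p Z i.2, ← hp1]
  refine Finset.sum_congr rfl fun ω _ => ?_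
  rcases (hp0 ω).eq_or_lt with hω | hω
  · simp [← hω]
  · rw [div_self (pmass_apply_pos hp0 Z hω).ne', mul_one]

lemma condMutInfo_nonneg (hp0 : ∀ ω, 0 ≤ p ω) (hp1 : ∑ ω, p ω = 1)
    (X : Ω → S) (Y : Ω → T) (Z : Ω → U) :
    0 ≤ condMutInfo p X Y Z := by
  set a := pmass p (fun ω => (X ω, Y ω, Z ω))
  set xz := pmass p (fun ω => (X ω, Z ω))
  set yz := pmass p (fun ω => (Y ω, Z ω))
  set z := pmass p Z
  -- `r` compares the conditionally independent coupling `P(x,z) P(y,z) / P(z)` with the joint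
  -- law; Gibbs gives `𝔼 log r ≤ 𝔼 r - 1 ≤ 0`.
  set r : Ω → ℝ := fun ω =>
    xz (X ω, Z ω) * yz (Y ω, Z ω) / (a (X ω, Y ω, Z ω) * z (Z ω)) with hr
  have hlog : ∀ ω, p ω * Real.log (r ω) = p ω * Real.log (xz (X ω, Z ω))
      + p ω * Real.log (yz (Y ω, Z ω)) - p ω * Real.log (a (X ω, Y ω, Z ω))
      - p ω * Real.log (z (Z ω)) := by
    intro ω
    rcases (hp0 ω).eq_or_lt with hω | hω
    · simp [← hω]
    · have pos : ∀ {S : Type} [DecidableEq S] (V : Ω → S), pmass p V (V ω) ≠ 0 :=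
        fun V => (pmass_apply_pos hp0 V hω).ne'
      rw [hr, Real.log_div (mul_ne_zero (pos _) (pos _)) (mul_ne_zero (pos _) (pos _)),
        Real.log_mul (pos _) (pos _), Real.log_mul (pos _) (pos _)]
      ring
  have hgibbs := sum_mul_log_le hp0 hp1 r fun ω hω => by
    have pos : ∀ {S : Type} [DecidableEq S] (V : Ω → S), 0 < pmass p V (V ω) :=
      fun V => pmass_apply_pos hp0 V hω
    exact div_pos (mul_pos (pos _) (pos _)) (mul_pos (pos _) (pos _))
  have hmass : ∑ ω, p ω * r ω ≤ 1 := by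
    rw [← sum_pmass_mul (fun ω => (X ω, Y ω, Z ω))
      fun i => xz (i.1, i.2.2) * yz i.2 / (a i * z i.2.2),
      ← sum_pmass_mul_pmass_div_pmass hp0 hp1 X Y Z]
    refine Finset.sum_le_sum fun i _ => ?_
    rcases (pmass_nonneg hp0 _ i).eq_or_lt with hi | hi
    · rw [← hi, zero_mul]
      exact div_nonneg (mul_nonneg (pmass_nonneg hp0 _ _) (pmass_nonneg hp0 _ _))
        (pmass_nonneg hp0 _ _)
    · rw [← mul_div_assoc, mul_div_mul_left _ _ hi.ne']
  simp only [condMutInfo, ent_eq_neg_sum]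
  simp only [hlog, Finset.sum_add_distrib, Finset.sum_sub_distrib] at hgibbs
  linarith

lemma condEnt_congr_left {X : Ω → S} {X' : Ω → T} (Z : Ω → U)
    (h : ∀ ω ω', X ω' = X ω ↔ X' ω' = X' ω) :
    condEnt p X Z = condEnt p X' Z := by
  rw [condEnt, condEnt, ent_congr_of_iff (Y := fun ω => (X' ω, Z ω))
    fun ω ω' => by simp only [Prod.ext_iff, h ω ω']]

lemma condEnt_congr_right (X : Ω → S) {Z : Ω → T} {Z' : Ω → U}
    (h : ∀ ω ω', Z ω' = Z ω ↔ Z' ω' = Z' ω) :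
    condEnt p X Z = condEnt p X Z' := by
  rw [condEnt, condEnt, ent_congr_of_iff h, ent_congr_of_iff (X := fun ω => (X ω, Z ω))
    (Y := fun ω => (X ω, Z' ω)) fun ω ω' => by simp only [Prod.ext_iff, h ω ω']]

lemma mutInfo_congr_right (X : Ω → S) {Y : Ω → T} {Y' : Ω → U}
    (h : ∀ ω ω', Y ω' = Y ω ↔ Y' ω' = Y' ω) :
    mutInfo p X Y = mutInfo p X Y' := by
  rw [mutInfo, mutInfo, ent_congr_of_iff h, ent_congr_of_iff (X := fun ω => (X ω, Y ω))
    (Y := fun ω => (X ω, Y' ω)) fun ω ω' => by simp only [Prod.ext_iff, h ω ω']]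

lemma condEnt_pair_eq (X : Ω → S) (Y : Ω → T) (Z : Ω → U) :
    condEnt p (fun ω => (X ω, Y ω)) Z = condEnt p X Z + condEnt p Y (fun ω => (X ω, Z ω)) := by
  have : ent p (fun ω => ((X ω, Y ω), Z ω)) = ent p (fun ω => (Y ω, X ω, Z ω)) :=
    ent_congr_of_iff fun _ _ => by simp only [Prod.ext_iff]; tauto
  simp only [condEnt, this]
  ring

lemma condEnt_pair_le (hp0 : ∀ ω, 0 ≤ p ω) (hp1 : ∑ ω, p ω = 1)
    (X : Ω → S) (Y : Ω → T) (Z : Ω → U) :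
    condEnt p (fun ω => (X ω, Y ω)) Z ≤ condEnt p X Z + condEnt p Y Z := by
  have := condMutInfo_nonneg hp0 hp1 X Y Z
  have : ent p (fun ω => ((X ω, Y ω), Z ω)) = ent p (fun ω => (X ω, Y ω, Z ω)) :=
    ent_congr_of_iff fun _ _ => by simp only [Prod.ext_iff]; tauto
  simp only [condMutInfo, condEnt] at *
  linarith

lemma condEnt_pair_right_le (hp0 : ∀ ω, 0 ≤ p ω) (hp1 : ∑ ω, p ω = 1)
    (X : Ω → S) (Y : Ω → T) (Z : Ω → U) :
    condEnt p X (fun ω => (Y ω, Z ω)) ≤ condEnt p X Y := by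
  have := condMutInfo_nonneg hp0 hp1 X Z Y
  have : ent p (fun ω => (X ω, Y ω, Z ω)) = ent p (fun ω => (X ω, Z ω, Y ω)) :=
    ent_congr_of_iff fun _ _ => by simp only [Prod.ext_iff]; tauto
  have : ent p (fun ω => (Y ω, Z ω)) = ent p (fun ω => (Z ω, Y ω)) :=
    ent_congr_of_iff fun _ _ => by simp only [Prod.ext_iff]; tauto
  simp only [condMutInfo, condEnt] at *
  linarith

lemma condEnt_le_condEnt_of_eq_comp (hp0 : ∀ ω, 0 ≤ p ω) (hp1 : ∑ ω, p ω = 1)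
    (X : Ω → S) {Y : Ω → T} {Z : Ω → U} {g : U → T} (hY : ∀ ω, Y ω = g (Z ω)) :
    condEnt p X Z ≤ condEnt p X Y :=
  calc condEnt p X Z = condEnt p X (fun ω => (Y ω, Z ω)) :=
        condEnt_congr_right X fun ω ω' => by
          simp only [Prod.ext_iff, hY]
          exact ⟨fun h => ⟨congrArg g h, h⟩, And.right⟩
    _ ≤ condEnt p X Y := condEnt_pair_right_le hp0 hp1 X Y Z

lemma condMutInfo_le_condEnt (hp0 : ∀ ω, 0 ≤ p ω) (X : Ω → S) (Y : Ω → T) (Z : Ω → U) :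
    condMutInfo p X Y Z ≤ condEnt p Y Z := by
  have := condEnt_nonneg hp0 Y fun ω => (X ω, Z ω)
  have : ent p (fun ω => (X ω, Y ω, Z ω)) = ent p (fun ω => (Y ω, X ω, Z ω)) :=
    ent_congr_of_iff fun _ _ => by simp only [Prod.ext_iff]; tauto
  simp only [condMutInfo, condEnt] at *
  linarith

lemma mutInfo_pair_eq (X : Ω → S) (Y : Ω → T) (Z : Ω → U) :
    mutInfo p X (fun ω => (Y ω, Z ω)) = mutInfo p X Z + condMutInfo p X Y Z := by
  simp only [mutInfo, condMutInfo]
  ring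

lemma condEnt_pair_le_add_of_eq_comp (hp0 : ∀ ω, 0 ≤ p ω) (hp1 : ∑ ω, p ω = 1)
    {F G : Type} [Fintype F] [DecidableEq F] [Fintype G] [DecidableEq G]
    {Y : Ω → S} {Y' : Ω → T} {X : Ω → F} {X' : Ω → G} {Z : Ω → U} {g : U → F} {g' : U → G}
    (hX : ∀ ω, X ω = g (Z ω)) (hX' : ∀ ω, X' ω = g' (Z ω)) :
    condEnt p (fun ω => (Y ω, Y' ω)) Z ≤ condEnt p Y X + condEnt p Y' X' :=
  (condEnt_pair_le hp0 hp1 Y Y' Z).trans <| add_le_add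
    (condEnt_le_condEnt_of_eq_comp hp0 hp1 Y hX) (condEnt_le_condEnt_of_eq_comp hp0 hp1 Y' hX')

lemma pmass_pair_eq_mul_of_eq_mul (hp1 : ∑ ω, p ω = 1) {X : Ω → S} {Y : Ω → T}
    {f : S → ℝ} {g : T → ℝ} (h : ∀ s t, pmass p (fun ω => (X ω, Y ω)) (s, t) = f s * g t)
    (s : S) (t : T) :
    pmass p (fun ω => (X ω, Y ω)) (s, t) = pmass p X s * pmass p Y t := by
  have hX : pmass p X s = f s * ∑ t, g t := by
    simp only [← sum_snd_pmass_pair X Y, h, Finset.mul_sum]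
  have hY : pmass p Y t = (∑ s, f s) * g t := by
    simp only [← sum_fst_pmass_pair X Y, h, Finset.sum_mul]
  have hfg : (∑ s, f s) * ∑ t, g t = 1 := by
    simp only [Finset.sum_mul_sum, ← h, sum_snd_pmass_pair, sum_pmass, hp1]
  rw [h, hX, hY]
  linear_combination (-(f s * g t)) * hfg

lemma ent_pair_eq_add_of_indep (hp0 : ∀ ω, 0 ≤ p ω) {X : Ω → S} {Y : Ω → T}
    (h : ∀ s t, pmass p (fun ω => (X ω, Y ω)) (s, t) = pmass p X s * pmass p Y t) :
    ent p (fun ω => (X ω, Y ω)) = ent p X + ent p Y := by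
  simp only [ent_eq_neg_sum, h, ← neg_add, ← Finset.sum_add_distrib, ← mul_add]
  congr 1
  refine Finset.sum_congr rfl fun ω _ => ?_
  rcases (hp0 ω).eq_or_lt with hω | hω
  · simp [← hω]
  · rw [Real.log_mul (pmass_apply_pos hp0 X hω).ne' (pmass_apply_pos hp0 Y hω).ne']

lemma mutInfo_eq_zero_of_indep (hp0 : ∀ ω, 0 ≤ p ω) {X : Ω → S} {Y : Ω → T}
    (h : ∀ s t, pmass p (fun ω => (X ω, Y ω)) (s, t) = pmass p X s * pmass p Y t) :
    mutInfo p X Y = 0 := by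
  rw [mutInfo, ent_pair_eq_add_of_indep hp0 h, sub_self]

def past {N : ℕ} (Y : Fin N → Ω → S) (i : Fin N) (ω : Ω) : Fin i → S :=
  fun j => Y ⟨j, j.2.trans i.2⟩ ω

lemma condEnt_pi_eq_sum (Z : Ω → U) :
    ∀ {N : ℕ} (Y : Fin N → Ω → S), condEnt p (fun ω i => Y i ω) Z
      = ∑ i, condEnt p (Y i) (fun ω => (past Y i ω, Z ω))
  | 0, Y => by
    rw [Finset.univ_eq_empty, Finset.sum_empty, condEnt, sub_eq_zero]
    exact ent_congr_of_iff fun ω ω' => by simp [Prod.ext_iff, funext_iff]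
  | N + 1, Y => by
    have hsplit : ∀ f f' : Fin (N + 1) → S,
        f' = f ↔ (fun i : Fin N => f' i.castSucc) = (fun i => f i.castSucc)
          ∧ f' (Fin.last N) = f (Fin.last N) := by
      simp [funext_iff, Fin.forall_fin_succ']
    rw [condEnt_congr_left Z
        (X' := fun ω => ((fun i : Fin N => Y i.castSucc ω), Y (Fin.last N) ω))
        fun ω ω' => by rw [hsplit, Prod.ext_iff],
      condEnt_pair_eq, condEnt_pi_eq_sum Z fun i => Y i.castSucc, Fin.sum_univ_castSucc]
    rfl

end Entropy

theorem cutset_bound_general {Ω : Type} [Fintype Ω] (p : Ω → ℝ)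
    (hp0 : ∀ ω, 0 ≤ p ω) (hp1 : ∑ ω, p ω = 1)
    (N : ℕ) (n nt : ℝ)
    {A B C D E F : Type}
    [Fintype A] [DecidableEq A] [Fintype B] [DecidableEq B]
    [Fintype C] [DecidableEq C] [Fintype D] [DecidableEq D]
    [Fintype E] [DecidableEq E] [Fintype F] [DecidableEq F]
    (W1 : Ω → A) (W2 : Ω → B) (tW1 : Ω → C) (tW2 : Ω → D)
    (Y1 tY2 : Fin N → Ω → E)
    (X2 tX1 : Fin N → Ω → F)
    -- the four messages are mutually independent
    (hindep : ∀ a b c d,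
      pmass p (fun ω => (W1 ω, W2 ω, tW1 ω, tW2 ω)) (a, b, c, d)
        = pmass p W1 a * pmass p W2 b * pmass p tW1 c * pmass p tW2 d)
    -- encoders: Xₖᵢ is a function of (Wₖ, Ỹₖ^{i-1}); X̃ₖᵢ of (W̃ₖ, Yₖ^{i-1})
    (hX2 : ∀ i : Fin N, ∃ f : B → ((j : Fin N) → j < i → E) → F,
      ∀ ω, X2 i ω = f (W2 ω) (fun j _ => tY2 j ω))
    (htX1 : ∀ i : Fin N, ∃ f : C → ((j : Fin N) → j < i → E) → F,
      ∀ ω, tX1 i ω = f (tW1 ω) (fun j _ => Y1 j ω))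
    -- channel: outputs are deterministic given the two inputs, with level bounds
    (hY1n : ∀ i, condEnt p (Y1 i) (X2 i) ≤ n)
    (htY2nt : ∀ i, condEnt p (tY2 i) (tX1 i) ≤ nt) :
    mutInfo p (fun ω => (W1 ω, tW2 ω))
      (fun ω => ((fun i => Y1 i ω), tW1 ω, (fun i => tY2 i ω), W2 ω))
      ≤ N * (n + nt) := by
  set V := fun ω => (tW1 ω, W2 ω)
  set Y := fun i ω => (Y1 i ω, tY2 i ω)
  have hMV : mutInfo p (fun ω => (W1 ω, tW2 ω)) V = 0 :=
    mutInfo_eq_zero_of_indep hp0 <| pmass_pair_eq_mul_of_eq_mul hp1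
      (f := fun u => pmass p W1 u.1 * pmass p tW2 u.2)
      (g := fun v => pmass p tW1 v.1 * pmass p W2 v.2) fun ⟨a, d⟩ ⟨c, b⟩ => by
        rw [pmass_congr (Y := fun ω => (W1 ω, W2 ω, tW1 ω, tW2 ω)) (t := (a, b, c, d))
          fun ω => by simp only [Prod.ext_iff]; tauto, hindep]
        ring
  have hstep : ∀ i, condEnt p (Y i) (fun ω => (past Y i ω, V ω)) ≤ n + nt := fun i => by
    obtain ⟨f, hf⟩ := hX2 i
    obtain ⟨f', hf'⟩ := htX1 i
    refine (condEnt_pair_le_add_of_eq_comp hp0 hp1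
      (g := fun z => f z.2.2 fun j hj => (z.1 ⟨j, hj⟩).2)
      (g' := fun z => f' z.2.1 fun j hj => (z.1 ⟨j, hj⟩).1) hf hf').trans ?_
    linarith [hY1n i, htY2nt i]
  calc _ = mutInfo p (fun ω => (W1 ω, tW2 ω)) (fun ω => ((fun i => Y i ω), V ω)) :=
        mutInfo_congr_right _ fun ω ω' => by
          simp only [Prod.ext_iff, funext_iff, forall_and, Y, V]
          tauto
    _ = condMutInfo p (fun ω => (W1 ω, tW2 ω)) (fun ω i => Y i ω) V := by
        rw [mutInfo_pair_eq, hMV, zero_add]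
    _ ≤ condEnt p (fun ω i => Y i ω) V := condMutInfo_le_condEnt hp0 _ _ _
    _ = ∑ i, condEnt p (Y i) (fun ω => (past Y i ω, V ω)) := condEnt_pi_eq_sum V Y
    _ ≤ ∑ _ : Fin N, (n + nt) := Finset.sum_le_sum fun i _ => hstep i
    _ = N * (n + nt) := by
        rw [Finset.sum_const, Finset.card_univ, Fintype.card_fin, nsmul_eq_mul]

/-- cutset bound for the two-way deterministic IC:
I(W₁, W̃₂ ; Y₁ᴺ, W̃₁, Ỹ₂ᴺ, W₂) ≤ N(n + ñ). -/
theorem cutset_bound {Ω : Type} [Fintype Ω] (p : Ω → ℝ)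
    (hp0 : ∀ ω, 0 ≤ p ω) (hp1 : ∑ ω, p ω = 1)
    (N : ℕ) (n nt : ℝ) (hn : 0 ≤ n) (hnt : 0 ≤ nt)
    {A B C D E F : Type}
    [Fintype A] [DecidableEq A] [Fintype B] [DecidableEq B]
    [Fintype C] [DecidableEq C] [Fintype D] [DecidableEq D]
    [Fintype E] [DecidableEq E] [Fintype F] [DecidableEq F]
    (W1 : Ω → A) (W2 : Ω → B) (tW1 : Ω → C) (tW2 : Ω → D)
    (Y1 Y2 tY1 tY2 : Fin N → Ω → E)
    (X1 X2 tX1 tX2 : Fin N → Ω → F)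
    -- the four messages are mutually independent
    (hindep : ∀ a b c d,
      pmass p (fun ω => (W1 ω, W2 ω, tW1 ω, tW2 ω)) (a, b, c, d)
        = pmass p W1 a * pmass p W2 b * pmass p tW1 c * pmass p tW2 d)
    -- encoders: Xₖᵢ is a function of (Wₖ, Ỹₖ^{i-1}); X̃ₖᵢ of (W̃ₖ, Yₖ^{i-1})
    (hX1 : ∀ i : Fin N, ∃ f : A → ((j : Fin N) → j < i → E) → F,
      ∀ ω, X1 i ω = f (W1 ω) (fun j _ => tY1 j ω))
    (hX2 : ∀ i : Fin N, ∃ f : B → ((j : Fin N) → j < i → E) → F,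
      ∀ ω, X2 i ω = f (W2 ω) (fun j _ => tY2 j ω))
    (htX1 : ∀ i : Fin N, ∃ f : C → ((j : Fin N) → j < i → E) → F,
      ∀ ω, tX1 i ω = f (tW1 ω) (fun j _ => Y1 j ω))
    (htX2 : ∀ i : Fin N, ∃ f : D → ((j : Fin N) → j < i → E) → F,
      ∀ ω, tX2 i ω = f (tW2 ω) (fun j _ => Y2 j ω))
    -- channel: outputs are deterministic given the two inputs, with level bounds
    (hY1det : ∀ i, condEnt p (Y1 i) (fun ω => (X1 i ω, X2 i ω)) = 0)
    (hY1n : ∀ i, condEnt p (Y1 i) (X2 i) ≤ n)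
    (htY2det : ∀ i, condEnt p (tY2 i) (fun ω => (tX1 i ω, tX2 i ω)) = 0)
    (htY2nt : ∀ i, condEnt p (tY2 i) (tX1 i) ≤ nt)
    -- Ỹ₂ᵢ is a deterministic function of the four messages
    (htY2msg : ∀ i : Fin N, ∃ f : A → B → C → D → E,
      ∀ ω, tY2 i ω = f (W1 ω) (W2 ω) (tW1 ω) (tW2 ω)) :
    mutInfo p (fun ω => (W1 ω, tW2 ω))
      (fun ω => ((fun i => Y1 i ω), tW1 ω, (fun i => tY2 i ω), W2 ω))
      ≤ N * (n + nt) :=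
  cutset_bound_general p hp0 hp1 N n nt W1 W2 tW1 tW2 Y1 tY2 X2 tX1 hindep hX2 htX1 hY1n htY2nt
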